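/- As a special case of subsampling amplification: if a mechanism M satisfies ε-DP (δ = 0), then the mechanism that first applies Poisson subsampling with rate β = n/N to a dataset of size N and then applies M satisfies ln(1 + (n/N)(e^ε − 1))-DP. -/

import Mathlib

open scoped ENNReal

/-- `ε`-differential privacy with respect to a neighboring relation `N`. -/
def DP {D Ω : Type*} (N : D → D → Prop) (M : D → PMF Ω) (ε : ℝ) : Prop :=
  ∀ d d', N d d' → ∀ O : Set Ω,
    (M d).toOuterMeasure O ≤ ENNReal.ofReal (Real.exp ε) * (M d').toOuterMeasure O

/-- Neighboring datasets differ by addition or removal of one record. -/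
def Neighbor {X : Type*} (d d' : List X) : Prop :=
  ∃ l₁ l₂ x, (d = l₁ ++ x :: l₂ ∧ d' = l₁ ++ l₂) ∨ (d' = l₁ ++ x :: l₂ ∧ d = l₁ ++ l₂)

/-- The Bernoulli `PMF` with an `ℝ≥0∞` parameter, as `PMF.bernoulli` was in the older Mathlib. -/
noncomputable def bernoulliENNReal (p : ℝ≥0∞) (h : p ≤ 1) : PMF Bool :=
  PMF.ofFintype (fun b => cond b p (1 - p)) (by simp [h])

/-- Poisson subsampling: each record of the dataset is included independently with
probability `β`. -/
noncomputable def poissonSample {X : Type*} (β : ℝ≥0∞) (h : β ≤ 1) :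
    List X → PMF (List X)
  | [] => PMF.pure []
  | x :: xs => (bernoulliENNReal β h).bind fun b =>
      (poissonSample β h xs).map fun s => if b then x :: s else s

/-!
Write a pair of neighbouring datasets as `l₁ ++ x :: l₂` and `l₁ ++ l₂`. Subsampling the longer
one either drops `x` (probability `1 - β`), which gives the subsample distribution of the shorter
one, or keeps it, inserting `x` into that subsample. Hence the probability of an output event is
a mixture `β A + (1 - β) B`, where `B` is its probability for the shorter dataset and, by `ε`-DP of
`M` applied to each subsample, `A ≤ e^ε B` and `B ≤ e^ε A`. The first bound gives
`β A + (1 - β) B ≤ (1 + β (e^ε - 1)) B`; the second gives the reverse direction because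
`(β e + 1 - β) (β / e + 1 - β) = 1 + β (1 - β) (e - 1)² / e ≥ 1`.
-/

open scoped NNReal

namespace PMF

variable {α β : Type*}

theorem toOuterMeasure_bind_le_mul (p : PMF α) {f g : α → PMF β} {s : Set β} {c : ℝ≥0∞}
    (h : ∀ a, (f a).toOuterMeasure s ≤ c * (g a).toOuterMeasure s) :
    (p.bind f).toOuterMeasure s ≤ c * (p.bind g).toOuterMeasure s := by
  simp only [toOuterMeasure_bind_apply, ← ENNReal.tsum_mul_left]
  refine ENNReal.tsum_le_tsum fun a => ?_
  rw [mul_left_comm]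
  gcongr
  exact h a

end PMF

theorem toOuterMeasure_bernoulliENNReal_bind_apply {α : Type*} (p : ℝ≥0∞) (hp : p ≤ 1)
    (f : Bool → PMF α) (s : Set α) :
    ((bernoulliENNReal p hp).bind f).toOuterMeasure s =
      p * (f true).toOuterMeasure s + (1 - p) * (f false).toOuterMeasure s := by
  simp [PMF.toOuterMeasure_bind_apply, bernoulliENNReal]

section PoissonSample

variable {X : Type*} (β : ℝ≥0∞) (hβ : β ≤ 1)

theorem poissonSample_append (l₁ l₂ : List X) :
    poissonSample β hβ (l₁ ++ l₂) =
      (poissonSample β hβ l₁).bind fun s₁ => (poissonSample β hβ l₂).map (s₁ ++ ·) := by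
  induction l₁ with
  | nil =>
    rw [List.nil_append, poissonSample, PMF.pure_bind]
    exact (PMF.map_id _).symm
  | cons x l₁ ih =>
    simp only [List.cons_append, poissonSample, ih, PMF.bind_bind, PMF.map_bind, PMF.bind_map,
      PMF.map_comp]
    congr! 3 with b s₁ s₂
    cases b <;> rfl

theorem poissonSample_append_cons (l₁ l₂ : List X) (x : X) :
    poissonSample β hβ (l₁ ++ x :: l₂) =
      (bernoulliENNReal β hβ).bind fun b => (poissonSample β hβ l₁).bind fun s₁ =>
        (poissonSample β hβ l₂).map fun s₂ => s₁ ++ if b then x :: s₂ else s₂ := by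
  rw [poissonSample_append, PMF.bind_comm]
  simp only [poissonSample, PMF.map_bind, PMF.map_comp]
  rfl

variable {Ω : Type*} (M : List X → PMF Ω)

theorem poissonSample_append_bind (l₁ l₂ : List X) :
    (poissonSample β hβ (l₁ ++ l₂)).bind M =
      (poissonSample β hβ l₁).bind fun s₁ =>
        (poissonSample β hβ l₂).bind fun s₂ => M (s₁ ++ s₂) := by
  simp only [poissonSample_append, PMF.bind_bind, PMF.bind_map]
  rfl

theorem toOuterMeasure_poissonSample_append_cons_bind_apply (l₁ l₂ : List X) (x : X) (O : Set Ω) :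
    ((poissonSample β hβ (l₁ ++ x :: l₂)).bind M).toOuterMeasure O =
      β * ((poissonSample β hβ l₁).bind fun s₁ => (poissonSample β hβ l₂).bind fun s₂ =>
          M (s₁ ++ x :: s₂)).toOuterMeasure O +
        (1 - β) * ((poissonSample β hβ (l₁ ++ l₂)).bind M).toOuterMeasure O := by
  rw [poissonSample_append_cons, PMF.bind_bind, toOuterMeasure_bernoulliENNReal_bind_apply,
    poissonSample_append_bind]
  simp only [PMF.bind_bind, PMF.bind_map]
  rfl

end PoissonSample

section Mixture

variable {β E A B : ℝ≥0∞}

theorem one_le_mix_mul_mix_inv (hβ : β ≤ 1) (hE0 : E ≠ 0) (hE : E ≠ ⊤) :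
    1 ≤ (β * E + (1 - β)) * (β * E⁻¹ + (1 - β)) := by
  lift β to ℝ≥0 using ne_top_of_le_ne_top ENNReal.one_ne_top hβ
  lift E to ℝ≥0 using hE
  have hβ : β ≤ 1 := by exact_mod_cast hβ
  have hE : (0 : ℝ) < E := NNReal.coe_pos.2 (pos_iff_ne_zero.2 (by exact_mod_cast hE0))
  rw [← ENNReal.coe_inv (by exact_mod_cast hE0)]
  norm_cast
  rw [← NNReal.coe_le_coe]
  push_cast [NNReal.coe_sub hβ]
  have h1β : (0 : ℝ) ≤ 1 - β := sub_nonneg.2 (by exact_mod_cast hβ)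
  calc (1 : ℝ) ≤ 1 + β * (1 - β) * (E - 1) ^ 2 / E := le_add_of_nonneg_right (by positivity)
    _ = (β * E + (1 - β)) * (β * (E : ℝ)⁻¹ + (1 - β)) := by
      field_simp
      ring

theorem mix_le_mul (h : A ≤ E * B) : β * A + (1 - β) * B ≤ (β * E + (1 - β)) * B :=
  calc β * A + (1 - β) * B ≤ β * (E * B) + (1 - β) * B := by gcongr
    _ = (β * E + (1 - β)) * B := by ring

theorem le_mul_mix (hβ : β ≤ 1) (hE0 : E ≠ 0) (hE : E ≠ ⊤) (h : B ≤ E * A) :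
    B ≤ (β * E + (1 - β)) * (β * A + (1 - β) * B) := by
  have hA : E⁻¹ * B ≤ A := by rwa [ENNReal.inv_mul_le_iff hE0 hE]
  calc B = 1 * B := (one_mul B).symm
    _ ≤ (β * E + (1 - β)) * (β * E⁻¹ + (1 - β)) * B := by
      gcongr
      exact one_le_mix_mul_mix_inv hβ hE0 hE
    _ = (β * E + (1 - β)) * (β * (E⁻¹ * B) + (1 - β) * B) := by ring
    _ ≤ (β * E + (1 - β)) * (β * A + (1 - β) * B) := by gcongr

end Mixture

theorem ofReal_exp_log_one_add_mul_exp_sub_one {β : ℝ≥0∞} (hβ : β ≤ 1) (ε : ℝ) :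
    ENNReal.ofReal (Real.exp (Real.log (1 + β.toReal * (Real.exp ε - 1)))) =
      β * ENNReal.ofReal (Real.exp ε) + (1 - β) := by
  have hb1 : β.toReal ≤ 1 := ENNReal.toReal_le_of_le_ofReal zero_le_one (by simpa using hβ)
  have hb0 : 0 ≤ β.toReal := ENNReal.toReal_nonneg
  have he : 0 < Real.exp ε := Real.exp_pos ε
  have hmix : 1 + β.toReal * (Real.exp ε - 1) = β.toReal * Real.exp ε + (1 - β.toReal) := by ring
  have hpos : 0 < β.toReal * Real.exp ε + (1 - β.toReal) := by
    rcases hb0.eq_or_lt with hb | hb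
    · simp [← hb]
    · nlinarith [mul_pos hb he]
  rw [hmix, Real.exp_log hpos, ENNReal.ofReal_add (by positivity) (by linarith),
    ENNReal.ofReal_mul hb0, ENNReal.ofReal_sub _ hb0, ENNReal.ofReal_one,
    ENNReal.ofReal_toReal (ne_top_of_le_ne_top ENNReal.one_ne_top hβ)]

theorem DP.poissonSample_bind {X Ω : Type*} {M : List X → PMF Ω} {ε : ℝ}
    (hM : DP Neighbor M ε) (β : ℝ≥0∞) (hβ : β ≤ 1) :
    DP Neighbor (fun d => (poissonSample β hβ d).bind M)
      (Real.log (1 + β.toReal * (Real.exp ε - 1))) := by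
  set E := ENNReal.ofReal (Real.exp ε)
  have hE0 : E ≠ 0 := by simpa [E] using Real.exp_pos ε
  have hE : E ≠ ⊤ := ENNReal.ofReal_ne_top
  rintro d d' ⟨l₁, l₂, x, ⟨rfl, rfl⟩ | ⟨rfl, rfl⟩⟩ O <;>
    simp only [ofReal_exp_log_one_add_mul_exp_sub_one hβ,
      toOuterMeasure_poissonSample_append_cons_bind_apply]
  · refine mix_le_mul ?_
    rw [poissonSample_append_bind]
    exact PMF.toOuterMeasure_bind_le_mul _ fun s₁ => PMF.toOuterMeasure_bind_le_mul _ fun s₂ =>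
      hM _ _ ⟨s₁, s₂, x, .inl ⟨rfl, rfl⟩⟩ O
  · refine le_mul_mix hβ hE0 hE ?_
    rw [poissonSample_append_bind]
    exact PMF.toOuterMeasure_bind_le_mul _ fun s₁ => PMF.toOuterMeasure_bind_le_mul _ fun s₂ =>
      hM _ _ ⟨s₁, s₂, x, .inr ⟨rfl, rfl⟩⟩ O

theorem subsampled_mechanism_dp_general {X Ω : Type*} (M : List X → PMF Ω) (ε : ℝ)
    (hM : DP Neighbor M ε)
    (n N : ℕ)
    (hβ : ((n : ℝ≥0∞) / (N : ℝ≥0∞)) ≤ 1) :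
    DP Neighbor (fun d => (poissonSample ((n : ℝ≥0∞) / (N : ℝ≥0∞)) hβ d).bind M)
      (Real.log (1 + ((n : ℝ) / (N : ℝ)) * (Real.exp ε - 1))) := by
  simpa [ENNReal.toReal_div] using hM.poissonSample_bind _ hβ

/-- Special case of subsampling amplification: if `M` is `ε`-DP, then Poisson
subsampling at rate `n/N` followed by `M` is `log (1 + (n/N)(exp ε − 1))`-DP. -/
theorem subsampled_mechanism_dp {X Ω : Type*} (M : List X → PMF Ω) (ε : ℝ)
    (hε : 0 ≤ ε) (hM : DP Neighbor M ε)
    (n N : ℕ) (hn : 0 < n) (hnN : n ≤ N)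
    (hβ : ((n : ℝ≥0∞) / (N : ℝ≥0∞)) ≤ 1) :
    DP Neighbor (fun d => (poissonSample ((n : ℝ≥0∞) / (N : ℝ≥0∞)) hβ d).bind M)
      (Real.log (1 + ((n : ℝ) / (N : ℝ)) * (Real.exp ε - 1))) :=
  subsampled_mechanism_dp_general M ε hM n N hβ
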